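/- arXiv:1004.0077 — 5 statements merged into one kernel-verified Lean document; each statement's English description precedes it below -/
import Mathlib

section
/- Let M be a nonzero finitely generated free ℤ-module and let B be a unimodular symmetric bilinear form on M. Then there exists x ∈ M such that B(x, x) is not divisible by 4. -/
/-- Let `M` be a nonzero finitely generated free `ℤ`-module and let `B` be a unimodular
symmetric bilinear form on `M`. Then there exists `x ∈ M` such that `B x x` is not
divisible by `4`. -/
theorem exists_self_form_not_dvd_four
    (M : Type*) [AddCommGroup M] [Module ℤ M]
    [Module.Free ℤ M] [Module.Finite ℤ M] [Nontrivial M]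
    (B : M →ₗ[ℤ] M →ₗ[ℤ] ℤ)
    (hsymm : ∀ x y : M, B x y = B y x)
    (hunimod : Function.Bijective fun x : M => (B x : M →ₗ[ℤ] ℤ)) :
    ∃ x : M, ¬ (4 ∣ B x x) := by
  by_contra h
  push_neg at h
  -- choose a basis and an index
  let bb := Module.Free.chooseBasis ℤ M
  have : Nonempty (Module.Free.ChooseBasisIndex ℤ M) := by
    rcases exists_ne (0 : M) with ⟨m, hm⟩
    by_contra hne
    rw [not_nonempty_iff] at hne
    exact hm (by simpa using bb.ext_elem_iff.mpr (fun i => (hne.elim i)))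
  obtain ⟨i⟩ := this
  obtain ⟨a, ha⟩ := hunimod.2 (bb.coord i)
  set b := bb i
  have hab : B a b = 1 := by
    have := congrArg (fun f : M →ₗ[ℤ] ℤ => f b) ha
    simpa [b] using this
  have hsum : B (a + b) (a + b) = B a a + B b b + 2 := by
    simp only [map_add, LinearMap.add_apply]
    rw [hsymm b a, hab]; ring
  obtain ⟨k, hk⟩ := h a
  obtain ⟨l, hl⟩ := h b
  obtain ⟨m, hm⟩ := h (a + b)
  rw [hsum, hk, hl] at hm
  omega
end

section
/- Let G be a finitely generated abelian group with torsion subgroup T, let F := G/T with quotient map π : G → F, let B be a symmetric ℤ-bilinear form on F, and fix c ∈ G and a nonzero integer k with B(π(c), π(c)) = −k. Define P̃_ℓ := {v ∈ G | v − c ∈ 2G and B(π(v), π(v)) = −k} and P̃_c := {(r, s) ∈ F × F | B(r, s) = 0 and r + s = π(c)}, and set 2T := {2t | t ∈ T}. Then: for every v ∈ P̃_ℓ there exists a unique pair (r, s) ∈ F × F with 2r = π(c) + π(v) and 2s = π(c) − π(v), and this pair belongs to P̃_c; the resulting map Φ : P̃_ℓ → P̃_c is surjective; and for v, v' ∈ P̃_ℓ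 one has Φ(v) = Φ(v') if and only if v − v' ∈ 2T. -/
private lemma two_smul_inj (G : Type*) [AddCommGroup G]
    {a b : G ⧸ AddCommGroup.torsion G} (h : 2 • a = 2 • b) : a = b := by
  have htf : ∀ x : G ⧸ AddCommGroup.torsion G, x ≠ 0 → ¬ IsOfFinAddOrder x :=
    fun x hx => not_isOfFinAddOrder_of_isAddTorsionFree hx
  have hz : 2 • (a - b) = 0 := by
    rw [smul_sub, h, sub_self]
  by_contra hne
  have : a - b ≠ 0 := sub_ne_zero.mpr hne
  exact htf _ this (isOfFinAddOrder_iff_nsmul_eq_zero.mpr ⟨2, by norm_num, hz⟩)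

/-- The algebraic core of Proposition 4.2: let `G` be a finitely generated abelian group
with torsion subgroup `T`, `F := G ⧸ T` with quotient map `π`, `B` a symmetric `ℤ`-bilinear
form on `F`, `c ∈ G` and `k ≠ 0` with `B (π c) (π c) = -k`.  For every
`v ∈ P̃_ℓ := {v | v - c ∈ 2G ∧ B (π v) (π v) = -k}` there is a unique pair `(r, s)` with
`2r = π c + π v` and `2s = π c - π v`; this pair lies in
`P̃_c := {(r, s) | B r s = 0 ∧ r + s = π c}`; the resulting map `Φ : P̃_ℓ → P̃_c` is
surjective; and `Φ v = Φ v'` if and only if `v - v' ∈ 2T`. -/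
theorem halving_map_of_twisted_reducibles
    (G : Type*) [AddCommGroup G] [AddGroup.FG G]
    (B : (G ⧸ AddCommGroup.torsion G) →+ (G ⧸ AddCommGroup.torsion G) →+ ℤ)
    (hsymm : ∀ x y, B x y = B y x)
    (c : G) (k : ℤ) (hk : k ≠ 0)
    (hc : B (QuotientAddGroup.mk' (AddCommGroup.torsion G) c)
        (QuotientAddGroup.mk' (AddCommGroup.torsion G) c) = -k) :
    letI π := QuotientAddGroup.mk' (AddCommGroup.torsion G)
    letI Pl : Set G := {v | (∃ g : G, v - c = 2 • g) ∧ B (π v) (π v) = -k}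
    letI Pc : Set ((G ⧸ AddCommGroup.torsion G) × (G ⧸ AddCommGroup.torsion G)) :=
      {p | B p.1 p.2 = 0 ∧ p.1 + p.2 = π c}
    (∀ v ∈ Pl, ∃! p : (G ⧸ AddCommGroup.torsion G) × (G ⧸ AddCommGroup.torsion G),
        2 • p.1 = π c + π v ∧ 2 • p.2 = π c - π v) ∧
    (∀ v ∈ Pl, ∀ p : (G ⧸ AddCommGroup.torsion G) × (G ⧸ AddCommGroup.torsion G),
        (2 • p.1 = π c + π v ∧ 2 • p.2 = π c - π v) → p ∈ Pc) ∧
    (∀ p ∈ Pc, ∃ v ∈ Pl, 2 • p.1 = π c + π v ∧ 2 • p.2 = π c - π v) ∧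
    (∀ v ∈ Pl, ∀ v' ∈ Pl,
      ∀ p p' : (G ⧸ AddCommGroup.torsion G) × (G ⧸ AddCommGroup.torsion G),
        (2 • p.1 = π c + π v ∧ 2 • p.2 = π c - π v) →
        (2 • p'.1 = π c + π v' ∧ 2 • p'.2 = π c - π v') →
        (p = p' ↔ ∃ t ∈ AddCommGroup.torsion G, v - v' = 2 • t)) := by
  set π := QuotientAddGroup.mk' (AddCommGroup.torsion G) with hπdef
  have hinj : ∀ a b : G ⧸ AddCommGroup.torsion G, 2 • a = 2 • b → a = b :=
    fun a b h => two_smul_inj G h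
  have hker : ∀ x : G, π x = 0 ↔ x ∈ AddCommGroup.torsion G := fun x =>
    QuotientAddGroup.eq_zero_iff x
  have hex : ∀ v ∈ {v | (∃ g, v - c = 2 • g) ∧ (B (π v)) (π v) = -k},
      ∃ p : (G ⧸ AddCommGroup.torsion G) × (G ⧸ AddCommGroup.torsion G),
      2 • p.1 = π c + π v ∧ 2 • p.2 = π c - π v := by
    rintro v ⟨⟨g, hg⟩, -⟩
    have hπ : π v - π c = 2 • π g := by
      have := congrArg π hg
      simpa [map_sub, map_nsmul] using this
    have hv2 : π v = π c + 2 • π g := by rw [← hπ]; abel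
    exact ⟨(π c + π g, - π g), by rw [hv2, smul_add, two_nsmul (π c)]; abel, by rw [hv2, smul_neg]; abel⟩
  refine ⟨?_, ?_, ?_, ?_⟩
  · intro v hv
    obtain ⟨p, hp⟩ := hex v hv
    refine ⟨p, hp, ?_⟩
    rintro q ⟨hq1, hq2⟩
    exact Prod.ext (hinj _ _ (by rw [hq1, hp.1])) (hinj _ _ (by rw [hq2, hp.2]))
  · rintro v ⟨-, hBv⟩ p ⟨hp1, hp2⟩
    constructor
    · have h4 : B (2 • p.1) (2 • p.2) = 4 * B p.1 p.2 := by
        simp only [two_smul, map_add, AddMonoidHom.add_apply]; ring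
      rw [hp1, hp2] at h4
      have hexp : B (π c + π v) (π c - π v) = B (π c) (π c) - B (π v) (π v) := by
        simp only [map_add, map_sub, AddMonoidHom.add_apply, AddMonoidHom.sub_apply]
        rw [hsymm (π v) (π c)]; ring
      rw [hexp, hc, hBv] at h4
      omega
    · apply hinj
      rw [smul_add, hp1, hp2, two_smul]
      abel
  · rintro ⟨r, s⟩ ⟨hB0, hrs⟩
    simp only at hB0 hrs
    obtain ⟨u, hu⟩ := QuotientAddGroup.mk'_surjective (AddCommGroup.torsion G) (-s)
    have hu' : π u = -s := hu
    have hπ : π (c + 2 • u) = r - s := by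
      have h1 : π (c + 2 • u) = π c + 2 • π u := by simp [map_add, map_nsmul]
      rw [h1, hu', ← hrs]; abel
    refine ⟨c + 2 • u, ⟨⟨u, by abel⟩, ?_⟩, ?_, ?_⟩
    · rw [hπ]
      have hexp : B (r - s) (r - s) = B r r - 2 * B r s + B s s := by
        simp only [map_sub, AddMonoidHom.sub_apply]
        rw [hsymm s r]; ring
      have hcc : B r r + 2 * B r s + B s s = -k := by
        have h2 : B (r + s) (r + s) = B r r + 2 * B r s + B s s := by
          simp only [map_add, AddMonoidHom.add_apply]
          rw [hsymm s r]; ring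
        rw [hrs, hc] at h2
        linarith
      rw [hexp, hB0]
      rw [hB0] at hcc
      linarith
    · simp only [hπ, ← hrs]; abel
    · simp only [hπ, ← hrs]; abel
  · rintro v ⟨⟨g, hg⟩, -⟩ v' ⟨⟨g', hg'⟩, -⟩ p p' ⟨hp1, hp2⟩ ⟨hp1', hp2'⟩
    constructor
    · intro hpp
      have hπv : π v = π v' := by
        have : π c + π v = π c + π v' := by rw [← hp1, ← hp1', hpp]
        exact add_left_cancel this
      have hvv : v - v' = 2 • (g - g') := by
        have h3 : v - v' = (v - c) - (v' - c) := by abel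
        rw [h3, hg, hg', smul_sub]
      refine ⟨g - g', ?_, hvv⟩
      refine (hker _).mp (hinj _ 0 ?_)
      rw [smul_zero, ← map_nsmul, ← hvv, map_sub, hπv, sub_self]
    · rintro ⟨t, ht, hvt⟩
      have hπv : π v = π v' := by
        have h0 : π t = 0 := (hker t).mpr ht
        have h5 := congrArg π hvt
        rw [map_sub, map_nsmul, h0, smul_zero] at h5
        exact sub_eq_zero.mp h5
      exact Prod.ext (hinj _ _ (by rw [hp1, hp1', hπv])) (hinj _ _ (by rw [hp2, hp2', hπv]))
end

section
/- Let G be a finitely generated abelian group with torsion subgroup T, let F := G/T with quotient map π : G → F, let B be a symmetric ℤ-bilinear form on F, and fix c ∈ G and a nonzero integer k with B(π(c), π(c)) = −k. Define P̃_ℓ := {v ∈ G | v − c ∈ 2G and B(π(v), π(v)) = −k} and P̃_c := {(r, s) ∈ F × F | B(r, s) = 0 and r + s = π(c)}, and set 2T := {2t | t ∈ T}. If in addition B is negative definite (B(x, x) < 0 for every x ≠ 0 in F), then P̃_ℓ and P̃_c are finite sets and the cardinality of P̃_ℓ equals the cardinality of 2T times the cardinality of P̃_c. -/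
section auxCardTwisted

variable {F : Type*} [AddCommGroup F]

private lemma cs_aux' (B : F →+ F →+ ℤ) (hsymm : ∀ x y, B x y = B y x)
    (hneg : ∀ x : F, x ≠ 0 → B x x < 0) (x y : F) :
    (B x y) ^ 2 ≤ B x x * B y y := by
  rcases eq_or_ne x 0 with rfl | hx
  · simp
  have hz : B ((B x x) • y - (B x y) • x) ((B x x) • y - (B x y) • x) ≤ 0 := by
    rcases eq_or_ne ((B x x) • y - (B x y) • x) 0 with h | h
    · rw [h]; simp
    · exact (hneg _ h).le
  have hxx := hneg x hx
  simp only [map_sub, map_zsmul, AddMonoidHom.sub_apply, AddMonoidHom.smul_apply,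
    smul_eq_mul] at hz
  rw [← hsymm x y] at hz
  rcases le_or_gt (B x y ^ 2) (B x x * B y y) with h | h
  · exact h
  · exfalso
    nlinarith [mul_pos (neg_pos.mpr hxx) (by nlinarith : (0:ℤ) < B x y ^ 2 - B x x * B y y)]

private lemma bounded_finite' [Module.Free ℤ F] [Module.Finite ℤ F]
    (B : F →+ F →+ ℤ) (hsymm : ∀ x y, B x y = B y x)
    (hneg : ∀ x : F, x ≠ 0 → B x x < 0) (m : ℤ) :
    {x : F | -m ≤ B x x}.Finite := by
  classical
  set b := Module.Free.chooseBasis ℤ F with hb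
  set φ : F → (Module.Free.ChooseBasisIndex ℤ F) → ℤ := fun x i => B x (b i) with hφ
  have hB0 : ∀ w : F, (∀ i, B w (b i) = 0) → w = 0 := by
    intro w hw
    by_contra hne
    have hBz : (B w).toIntLinearMap = (0 : F →ₗ[ℤ] ℤ) := b.ext fun i => by simpa using hw i
    have : B w w = 0 := by
      have := congrArg (fun f => f w) hBz; simpa using this
    exact absurd this (hneg _ hne).ne
  have hinj : Function.Injective φ := by
    intro x y hxy
    have hxy0 : x - y = 0 := hB0 _ fun i => by
      have h := congrFun hxy i
      simp only [hφ] at h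
      simp [map_sub, AddMonoidHom.sub_apply, h]
    exact sub_eq_zero.mp hxy0
  have hBle : ∀ x : F, B x x ≤ 0 := by
    intro x
    rcases eq_or_ne x 0 with rfl | h
    · simp
    · exact (hneg x h).le
  have hsub : {x : F | -m ≤ B x x} ⊆
      φ ⁻¹' (Set.pi Set.univ fun i =>
        Set.Icc (-(m * (-(B (b i) (b i))))) (m * (-(B (b i) (b i))))) := by
    intro x hx i _
    have hcs := cs_aux' B hsymm hneg x (b i)
    have h1 : B x x ≤ 0 := hBle x
    have h2 : B (b i) (b i) ≤ 0 := hBle (b i)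
    have hx' : -m ≤ B x x := hx
    have hsq : B x (b i) ^ 2 ≤ m * (-(B (b i) (b i))) := by
      nlinarith [mul_nonneg (by linarith : (0:ℤ) ≤ m + B x x)
        (by linarith : (0:ℤ) ≤ -(B (b i) (b i)))]
    simp only [Set.mem_Icc, hφ]
    constructor
    · nlinarith [Int.le_self_sq (-(B x (b i)))]
    · nlinarith [Int.le_self_sq (B x (b i))]
  exact Set.Finite.subset (Set.Finite.preimage hinj.injOn
    (Set.Finite.pi fun i => Set.finite_Icc _ _)) hsub

end auxCardTwisted

/-- Ordered-pair form of Proposition 4.2: with `G`, `T`, `F = G ⧸ T`, `π`, `B`, `c`, `k` as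
before, if in addition `B` is negative definite then
`P̃_ℓ := {v | v - c ∈ 2G ∧ B (π v) (π v) = -k}` and
`P̃_c := {(r, s) | B r s = 0 ∧ r + s = π c}` are finite, and
`|P̃_ℓ| = |2T| ⬝ |P̃_c|`. -/
theorem card_twisted_reducibles
    (G : Type*) [AddCommGroup G] [AddGroup.FG G]
    (B : (G ⧸ AddCommGroup.torsion G) →+ (G ⧸ AddCommGroup.torsion G) →+ ℤ)
    (hsymm : ∀ x y, B x y = B y x)
    (hneg : ∀ x : G ⧸ AddCommGroup.torsion G, x ≠ 0 → B x x < 0)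
    (c : G) (k : ℤ) (hk : k ≠ 0)
    (hc : B (QuotientAddGroup.mk' (AddCommGroup.torsion G) c)
        (QuotientAddGroup.mk' (AddCommGroup.torsion G) c) = -k) :
    letI π := QuotientAddGroup.mk' (AddCommGroup.torsion G)
    letI Pl : Set G := {v | (∃ g : G, v - c = 2 • g) ∧ B (π v) (π v) = -k}
    letI Pc : Set ((G ⧸ AddCommGroup.torsion G) × (G ⧸ AddCommGroup.torsion G)) :=
      {p | B p.1 p.2 = 0 ∧ p.1 + p.2 = π c}
    letI twoT : Set G := {x | ∃ t ∈ AddCommGroup.torsion G, x = 2 • t}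
    Pl.Finite ∧ Pc.Finite ∧ Nat.card Pl = Nat.card twoT * Nat.card Pc := by
  classical
  -- instances on `F = G ⧸ torsion G`
  haveI hGfin : Module.Finite ℤ G := Module.Finite.iff_addGroup_fg.mpr inferInstance
  haveI hTfin : Finite (AddCommGroup.torsion G) := by
    have h1 : (Submodule.torsion ℤ G).FG := IsNoetherian.noetherian _
    rw [Submodule.fg_iff_addSubgroup_fg, Submodule.torsion_int] at h1
    haveI : AddGroup.FG (AddCommGroup.torsion G) := (AddGroup.fg_iff_addSubgroup_fg _).mpr h1
    refine AddCommGroup.finite_of_fg_torsion _ ?_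
    intro g
    obtain ⟨n, hn, hg⟩ := isOfFinAddOrder_iff_nsmul_eq_zero.mp
      ((AddCommGroup.mem_torsion g.1).mp g.2)
    exact isOfFinAddOrder_iff_nsmul_eq_zero.mpr ⟨n, hn, Subtype.ext (by simpa using hg)⟩
  haveI hNZ : NoZeroSMulDivisors ℤ (G ⧸ AddCommGroup.torsion G) := by
    constructor
    intro n x h
    rcases eq_or_ne n 0 with rfl | hn
    · exact Or.inl rfl
    refine Or.inr ?_
    obtain ⟨v, rfl⟩ := QuotientAddGroup.mk'_surjective (AddCommGroup.torsion G) x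
    have hz : (QuotientAddGroup.mk' (AddCommGroup.torsion G)) (n • v) = 0 := by
      rw [map_zsmul, ← Int.cast_smul_eq_zsmul ℤ, Int.cast_id]; exact h
    have hnv : n • v ∈ AddCommGroup.torsion G := (QuotientAddGroup.eq_zero_iff _).mp hz
    obtain ⟨m, hm, hmv⟩ := isOfFinAddOrder_iff_nsmul_eq_zero.mp
      ((AddCommGroup.mem_torsion _).mp hnv)
    have hv : v ∈ AddCommGroup.torsion G := by
      rw [AddCommGroup.mem_torsion, isOfFinAddOrder_iff_zsmul_eq_zero]
      exact ⟨(m : ℤ) * n, mul_ne_zero (by exact_mod_cast hm.ne') hn,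
        by rw [mul_smul, natCast_zsmul]; exact hmv⟩
    exact (QuotientAddGroup.eq_zero_iff _).mpr hv
  haveI hMF : Module.Finite ℤ (G ⧸ AddCommGroup.torsion G) :=
    Module.Finite.of_surjective
      ((QuotientAddGroup.mk' (AddCommGroup.torsion G)).toIntLinearMap)
      (QuotientAddGroup.mk'_surjective _)
  haveI hFree : Module.Free ℤ (G ⧸ AddCommGroup.torsion G) := inferInstance
  -- notation
  set π : G →+ G ⧸ AddCommGroup.torsion G := QuotientAddGroup.mk' (AddCommGroup.torsion G)
    with hπdef
  set Pl : Set G := {v | (∃ g : G, v - c = 2 • g) ∧ B (π v) (π v) = -k} with hPl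
  set Pc : Set ((G ⧸ AddCommGroup.torsion G) × (G ⧸ AddCommGroup.torsion G)) :=
      {p | B p.1 p.2 = 0 ∧ p.1 + p.2 = π c} with hPc
  set twoT : Set G := {x | ∃ t ∈ AddCommGroup.torsion G, x = 2 • t} with h2T
  have hπ0 : ∀ x : G, π x = 0 ↔ x ∈ AddCommGroup.torsion G := fun x =>
    QuotientAddGroup.eq_zero_iff x
  -- F is 2-torsion-free
  have hhalf : ∀ y : G ⧸ AddCommGroup.torsion G, y + y = 0 → y = 0 := by
    intro y hy
    obtain ⟨v, rfl⟩ := QuotientAddGroup.mk'_surjective (AddCommGroup.torsion G) y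
    have h0 : π (v + v) = 0 := by rw [map_add]; exact hy
    have hvv : v + v ∈ AddCommGroup.torsion G := (hπ0 _).mp h0
    obtain ⟨m, hm, hmv⟩ := isOfFinAddOrder_iff_nsmul_eq_zero.mp
      ((AddCommGroup.mem_torsion _).mp hvv)
    have hv : v ∈ AddCommGroup.torsion G := by
      rw [AddCommGroup.mem_torsion, isOfFinAddOrder_iff_nsmul_eq_zero]
      refine ⟨m * 2, by omega, ?_⟩
      rw [mul_smul, two_nsmul]
      exact hmv
    exact (hπ0 _).mpr hv
  have hBle : ∀ x : G ⧸ AddCommGroup.torsion G, B x x ≤ 0 := by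
    intro x
    rcases eq_or_ne x 0 with rfl | h
    · simp
    · exact (hneg x h).le
  -- finiteness of the bounded set
  have hSfin : {x : G ⧸ AddCommGroup.torsion G | -k ≤ B x x}.Finite :=
    bounded_finite' B hsymm hneg k
  -- Pc is finite
  have hPcsum : ∀ p ∈ Pc, B p.1 p.1 + B p.2 p.2 = -k := by
    rintro p ⟨hp1, hp2⟩
    have h := hc
    rw [← hp2] at h
    simp only [map_add, AddMonoidHom.add_apply] at h
    have h21 := hsymm p.2 p.1
    linarith
  have hPcfin : Pc.Finite := by
    refine Set.Finite.subset (hSfin.prod hSfin) ?_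
    intro p hp
    have hsum := hPcsum p hp
    exact ⟨by simpa using (by linarith [hBle p.2] : -k ≤ B p.1 p.1),
      by simpa using (by linarith [hBle p.1] : -k ≤ B p.2 p.2)⟩
  -- Pl is finite
  have hfiber : ∀ y : G ⧸ AddCommGroup.torsion G, (π ⁻¹' {y}).Finite := by
    intro y
    obtain ⟨v0, hv0⟩ := QuotientAddGroup.mk'_surjective (AddCommGroup.torsion G) y
    have hsub : π ⁻¹' {y} ⊆ (fun t : G => v0 + t) '' (AddCommGroup.torsion G : Set G) := by
      intro u hu
      have hu' : π u = y := hu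
      have h0 : π (u - v0) = 0 := by
        rw [map_sub, hu']
        rw [show π v0 = y from hv0]
        exact sub_self y
      refine ⟨u - v0, (hπ0 _).mp h0, ?_⟩
      show v0 + (u - v0) = u
      abel
    exact Set.Finite.subset (((AddCommGroup.torsion G : Set G)).toFinite.image _) hsub
  have hPlfin : Pl.Finite := by
    refine Set.Finite.subset (Set.Finite.biUnion hSfin (fun y _ => hfiber y)) ?_
    intro v hv
    have hvS : π v ∈ {x : G ⧸ AddCommGroup.torsion G | -k ≤ B x x} := le_of_eq hv.2.symm
    exact Set.mem_biUnion hvS rfl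
  -- the section
  obtain ⟨sec, hsec⟩ : ∃ sec : (G ⧸ AddCommGroup.torsion G) → G, ∀ y, π (sec y) = y :=
    ⟨fun y => (QuotientAddGroup.mk'_surjective (AddCommGroup.torsion G) y).choose,
     fun y => (QuotientAddGroup.mk'_surjective (AddCommGroup.torsion G) y).choose_spec⟩
  have h2T_T : ∀ x ∈ twoT, x ∈ AddCommGroup.torsion G := by
    rintro x ⟨t, ht, rfl⟩
    rw [two_nsmul]
    exact add_mem ht ht
  have hπ2T : ∀ x ∈ twoT, π x = 0 := fun x hx => (hπ0 x).mpr (h2T_T x hx)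
  -- the map
  have hmem : ∀ x ∈ twoT, ∀ p ∈ Pc, (c - 2 • sec p.2 + x) ∈ Pl := by
    intro x hx p hp
    obtain ⟨hp1, hp2⟩ := hp
    constructor
    · obtain ⟨t, ht, rfl⟩ := hx
      exact ⟨t - sec p.2, by abel⟩
    · have hπv : π (c - 2 • sec p.2 + x) = p.1 - p.2 := by
        rw [map_add, map_sub, map_nsmul, hsec, hπ2T x hx, ← hp2]
        abel
      rw [hπv]
      have h := hc
      rw [← hp2] at h
      simp only [map_add, map_sub, AddMonoidHom.add_apply, AddMonoidHom.sub_apply] at h ⊢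
      have h21 := hsymm p.2 p.1
      linarith
  let f : twoT × Pc → Pl := fun z => ⟨c - 2 • sec z.2.1.2 + z.1.1, hmem _ z.1.2 _ z.2.2⟩
  have hfinj : Function.Injective f := by
    rintro ⟨⟨x, hx⟩, ⟨p, hp⟩⟩ ⟨⟨x', hx'⟩, ⟨p', hp'⟩⟩ hf
    have hv : c - 2 • sec p.2 + x = c - 2 • sec p'.2 + x' := congrArg Subtype.val hf
    have h2 : p.2 + p.2 = p'.2 + p'.2 := by
      have h := congrArg π hv
      rw [map_add, map_add, map_sub, map_sub, map_nsmul, map_nsmul, hsec, hsec,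
        hπ2T x hx, hπ2T x' hx', add_zero, add_zero, two_nsmul, two_nsmul] at h
      exact sub_right_injective h
    have hs : p.2 = p'.2 := by
      have := hhalf (p.2 - p'.2) (by rw [show p.2 - p'.2 + (p.2 - p'.2)
        = (p.2 + p.2) - (p'.2 + p'.2) by abel, h2, sub_self])
      exact sub_eq_zero.mp this
    have hr : p.1 = p'.1 := by
      have h3 : p.1 + p.2 = p'.1 + p'.2 := hp.2.trans hp'.2.symm
      rw [hs] at h3
      exact add_right_cancel h3
    have hpp : p = p' := Prod.ext hr hs
    subst hpp
    have hxx : x = x' := by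
      rw [hs] at hv
      exact add_left_cancel hv
    simp only [Prod.mk.injEq, Subtype.mk.injEq]
    exact ⟨hxx, trivial⟩
  have hfsurj : Function.Surjective f := by
    rintro ⟨v, hv1, hv2⟩
    obtain ⟨g, hg⟩ := hv1
    have hπv : π v = π c + (π g + π g) := by
      have h := congrArg π hg
      rw [map_sub, map_nsmul, two_nsmul] at h
      have := eq_add_of_sub_eq h
      rw [this]
      abel
    have hrs : B (π c + π g) (-(π g)) = 0 := by
      have h := hv2
      rw [hπv] at h
      simp only [map_add, map_neg, AddMonoidHom.add_apply, AddMonoidHom.neg_apply] at h ⊢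
      have h1 := hsymm (π g) (π c)
      have h2 := hc
      linarith
    have hpPc : ((π c + π g, -(π g)) :
        (G ⧸ AddCommGroup.torsion G) × (G ⧸ AddCommGroup.torsion G)) ∈ Pc :=
      ⟨hrs, by show π c + π g + -(π g) = π c; abel⟩
    have hπw : π (g + sec (-(π g))) = 0 := by
      rw [map_add, hsec]
      simp
    have hx2T : v - (c - 2 • sec (-(π g))) ∈ twoT := by
      refine ⟨g + sec (-(π g)), (hπ0 _).mp hπw, ?_⟩
      have hv' : v = c + 2 • g := by
        have := eq_add_of_sub_eq hg
        rw [this]; abel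
      rw [hv']
      abel
    refine ⟨⟨⟨v - (c - 2 • sec (-(π g))), hx2T⟩, ⟨(π c + π g, -(π g)), hpPc⟩⟩, ?_⟩
    apply Subtype.ext
    show c - 2 • sec (-(π g)) + (v - (c - 2 • sec (-(π g)))) = v
    abel
  refine ⟨hPlfin, hPcfin, ?_⟩
  rw [← Nat.card_prod]
  exact (Nat.card_congr (Equiv.ofBijective f ⟨hfinj, hfsurj⟩)).symm
end

section
/- Let E be a real Banach space and B a Hausdorff smooth (C^∞) Banach manifold modelled on E which admits smooth partitions of unity, i.e., every open cover of B has a subordinate C^∞ partition of unity. Let L → B be a smooth real vector bundle of rank 2 (typical fiber ℝ²). If L admits a continuous section that vanishes nowhere, then L admits a C^∞ section that vanishes nowhere. -/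
open Bundle Set
open scoped Manifold

open Function Filter Topology

/-- Auxiliary: the dot product on `ℝ × ℝ` with first argument fixed, as a linear map. -/
noncomputable def dotL (v : ℝ × ℝ) : (ℝ × ℝ) →ₗ[ℝ] ℝ :=
  v.1 • LinearMap.fst ℝ ℝ ℝ + v.2 • LinearMap.snd ℝ ℝ ℝ

lemma dotL_apply (v w : ℝ × ℝ) : dotL v w = v.1 * w.1 + v.2 * w.2 := by
  simp [dotL, smul_eq_mul]

lemma dotL_self_nonneg (v : ℝ × ℝ) : 0 ≤ dotL v v := by
  rw [dotL_apply]; nlinarith [mul_self_nonneg v.1, mul_self_nonneg v.2]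

lemma dotL_self_pos {v : ℝ × ℝ} (hv : v ≠ 0) : 0 < dotL v v := by
  rw [dotL_apply]
  have h : v.1 ≠ 0 ∨ v.2 ≠ 0 := by
    by_contra h
    push_neg at h
    exact hv (Prod.ext h.1 h.2)
  rcases h with h | h
  · nlinarith [mul_self_nonneg v.2, mul_self_pos.mpr h]
  · nlinarith [mul_self_nonneg v.1, mul_self_pos.mpr h]

/-- Auxiliary: a locally finite sum `∑ᶠ i, f i y * h i y` is continuous at a point provided each
`f i` is continuous with locally finite supports and each `h i` is continuous at the point whenever
the point lies in `tsupport (f i)`. -/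
lemma continuousAt_finsum_mul {ι X : Type*} [TopologicalSpace X] {f : ι → X → ℝ}
    (lf : LocallyFinite fun i => support (f i)) (hf : ∀ i, Continuous (f i))
    {h : ι → X → ℝ} {x₀ : X} (hh : ∀ i, x₀ ∈ tsupport (f i) → ContinuousAt (h i) x₀) :
    ContinuousAt (fun y => ∑ᶠ i, f i y * h i y) x₀ := by
  have lf' : LocallyFinite fun i => support fun y => f i y * h i y := by
    refine lf.subset fun i y hy => ?_
    simp only [mem_support] at hy ⊢
    exact fun h0 => hy (by rw [h0, zero_mul])
  obtain ⟨T, hT⟩ := finsum_eventually_eq_sum lf' x₀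
  have hterm : ∀ i, ContinuousAt (fun y => f i y * h i y) x₀ := by
    intro i
    by_cases hi : x₀ ∈ tsupport (f i)
    · exact ((hf i).continuousAt).mul (hh i hi)
    · have hev : (fun y => f i y * h i y) =ᶠ[𝓝 x₀] fun _ => 0 := by
        filter_upwards [(isOpen_compl_iff.2 (isClosed_tsupport (f i))).mem_nhds hi] with y hy
        simp [image_eq_zero_of_notMem_tsupport hy]
      exact continuousAt_const.congr_of_eventuallyEq hev
  have hsum : ContinuousAt (fun y => ∑ i ∈ T, f i y * h i y) x₀ :=
    tendsto_finset_sum _ fun i _ => hterm i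
  exact hsum.congr_of_eventuallyEq hT

/-- Lemma 7.1: Let `B` be a Hausdorff smooth Banach manifold modelled on a real Banach
space `E` which admits smooth partitions of unity.  Let `L → B` be a smooth real vector
bundle of rank `2` (typical fiber `ℝ × ℝ`).  If `L` admits a continuous nowhere-vanishing
section, then it admits a smooth nowhere-vanishing section. -/
theorem exists_smooth_nonvanishing_section_of_continuous
    {E : Type u} [NormedAddCommGroup E] [NormedSpace ℝ E]
    {B : Type u} [TopologicalSpace B] [T2Space B] [ChartedSpace E B]
    [IsManifold 𝓘(ℝ, E) (⊤ : ℕ∞) B]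
    (hpart : ∀ (ι : Type u) (U : ι → Set B), (∀ i, IsOpen (U i)) → (⋃ i, U i) = univ →
      ∃ f : SmoothPartitionOfUnity ι 𝓘(ℝ, E) B univ, f.IsSubordinate U)
    (L : B → Type u) [∀ x, TopologicalSpace (L x)] [∀ x, AddCommGroup (L x)]
    [∀ x, Module ℝ (L x)] [TopologicalSpace (TotalSpace (ℝ × ℝ) L)]
    [FiberBundle (ℝ × ℝ) L] [VectorBundle ℝ (ℝ × ℝ) L]
    [ContMDiffVectorBundle (⊤ : ℕ∞) (ℝ × ℝ) L 𝓘(ℝ, E)]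
    (s : ∀ x, L x)
    (hs : Continuous fun x => TotalSpace.mk' (ℝ × ℝ) x (s x))
    (hs0 : ∀ x, s x ≠ 0) :
    ∃ t : ∀ x, L x,
      ContMDiff 𝓘(ℝ, E) (𝓘(ℝ, E).prod 𝓘(ℝ, ℝ × ℝ)) (⊤ : ℕ∞)
        (fun x => TotalSpace.mk' (ℝ × ℝ) x (t x)) ∧
      ∀ x, t x ≠ 0 := by
  classical
  -- notation for trivializations and their base sets
  set U : B → Set B := fun x => (trivializationAt (ℝ × ℝ) L x).baseSet with hUdef
  have hUopen : ∀ x, IsOpen (U x) := fun x => (trivializationAt (ℝ × ℝ) L x).open_baseSet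
  have hUmem : ∀ x, x ∈ U x := fun x => mem_baseSet_trivializationAt (ℝ × ℝ) L x
  -- first smooth partition of unity, subordinate to the trivialization base sets
  obtain ⟨f, hf⟩ := hpart B U hUopen
    (eq_univ_of_forall fun x => mem_iUnion.2 ⟨x, hUmem x⟩)
  -- coordinates of `s`
  set S : B → B → ℝ × ℝ :=
    fun i y => (trivializationAt (ℝ × ℝ) L i).linearMapAt ℝ y (s y) with hSdef
  -- the fiberwise pairing certifying nonvanishing
  set φ : ∀ y : B, L y → ℝ := fun y w =>
    ∑ᶠ i, f i y * dotL (S i y) ((trivializationAt (ℝ × ℝ) L i).linearMapAt ℝ y w) with hφdef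
  have hfin : ∀ y : B, (support fun i => f i y).Finite := by
    intro y
    exact (f.locallyFinite.point_finite y).subset fun i hi => by simpa using hi
  -- `φ y` is a finite sum
  have hφsum : ∀ (y : B) (w : L y),
      φ y w = ∑ i ∈ (hfin y).toFinset,
        f i y * dotL (S i y) ((trivializationAt (ℝ × ℝ) L i).linearMapAt ℝ y w) := by
    intro y w
    refine finsum_eq_finset_sum_of_support_subset _ ?_
    intro i hi
    simp only [mem_support] at hi
    simp only [Finset.coe_sort_coe, Set.Finite.coe_toFinset, mem_support]
    exact fun h0 => hi (by rw [h0, zero_mul])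
  have hφ0 : ∀ y : B, φ y 0 = 0 := by
    intro y
    rw [hφdef]
    have h0 : ∀ i : B,
        f i y * dotL (S i y) ((trivializationAt (ℝ × ℝ) L i).linearMapAt ℝ y 0) = 0 := by
      intro i; simp
    simp only [h0, finsum_zero]
  -- `φ y (s y) > 0`
  have hφs : ∀ y : B, 0 < φ y (s y) := by
    intro y
    obtain ⟨i₀, hi₀⟩ := f.exists_pos_of_mem (mem_univ y)
    rw [hφsum]
    refine Finset.sum_pos' ?_ ⟨i₀, ?_, ?_⟩
    · intro i _
      exact mul_nonneg (f.nonneg i y) (dotL_self_nonneg _)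
    · simp only [Set.Finite.mem_toFinset, mem_support]
      exact ne_of_gt hi₀
    · have hyU : y ∈ U i₀ := hf i₀ (subset_tsupport _ (by simpa using ne_of_gt hi₀))
      have hS : S i₀ y ≠ 0 := by
        intro h0
        apply hs0 y
        have h4 := (trivializationAt (ℝ × ℝ) L i₀).symmₗ_linearMapAt (R := ℝ) hyU (s y)
        have h0' : (trivializationAt (ℝ × ℝ) L i₀).linearMapAt ℝ y (s y) = 0 := h0
        rw [h0', map_zero] at h4
        exact h4.symm
      exact mul_pos hi₀ (dotL_self_pos hS)
  -- local smooth sections, constant in a trivialization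
  set σ : B → ∀ y : B, L y := fun x y =>
    (trivializationAt (ℝ × ℝ) L x).symm y
      ((trivializationAt (ℝ × ℝ) L x) ⟨x, s x⟩).2 with hσdef
  have hσx : ∀ x : B, σ x x = s x := fun x =>
    (trivializationAt (ℝ × ℝ) L x).symm_apply_apply_mk (hUmem x) (s x)
  -- the local sections are continuous on `U x` as maps to the total space
  have hσcont : ∀ x : B, ∀ y₀ ∈ U x,
      ContinuousAt (fun y => TotalSpace.mk' (ℝ × ℝ) y (σ x y)) y₀ := by
    intro x y₀ hy₀
    have h1 : ContinuousAt (fun z : B × (ℝ × ℝ) =>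
        TotalSpace.mk' (ℝ × ℝ) z.1 ((trivializationAt (ℝ × ℝ) L x).symm z.1 z.2))
        (y₀, ((trivializationAt (ℝ × ℝ) L x) ⟨x, s x⟩).2) :=
      (trivializationAt (ℝ × ℝ) L x).continuousOn_symm.continuousAt
        ((((hUopen x).prod isOpen_univ).mem_nhds ⟨hy₀, mem_univ _⟩))
    have h2 : ContinuousAt (fun y : B =>
        ((y, ((trivializationAt (ℝ × ℝ) L x) ⟨x, s x⟩).2) : B × (ℝ × ℝ))) y₀ :=
      (continuous_id.prodMk continuous_const).continuousAt
    simp only [hσdef]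
    exact ContinuousAt.comp (x := y₀)
      (f := fun y : B => ((y, ((trivializationAt (ℝ × ℝ) L x) ⟨x, s x⟩).2) : B × (ℝ × ℝ))) h1 h2
  -- the local sections are smooth on `U x` as maps to the total space
  have hσsmooth : ∀ x : B, ∀ y₀ ∈ U x,
      ContMDiffAt 𝓘(ℝ, E) (𝓘(ℝ, E).prod 𝓘(ℝ, ℝ × ℝ)) (⊤ : ℕ∞)
        (fun y => TotalSpace.mk' (ℝ × ℝ) y (σ x y)) y₀ := by
    intro x y₀ hy₀
    have hsrc : TotalSpace.mk' (ℝ × ℝ) y₀ (σ x y₀) ∈ (trivializationAt (ℝ × ℝ) L x).source := by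
      rw [Trivialization.mem_source]; exact hy₀
    refine ((trivializationAt (ℝ × ℝ) L x).contMDiffAt_iff
      (f := fun y => TotalSpace.mk' (ℝ × ℝ) y (σ x y)) hsrc).2 ⟨contMDiffAt_id, ?_⟩
    have hev : (fun y => ((trivializationAt (ℝ × ℝ) L x)
          (TotalSpace.mk' (ℝ × ℝ) y (σ x y))).2) =ᶠ[𝓝 y₀]
        fun _ => ((trivializationAt (ℝ × ℝ) L x) ⟨x, s x⟩).2 := by
      filter_upwards [(hUopen x).mem_nhds hy₀] with y hy
      simp only [hσdef]
      rw [(trivializationAt (ℝ × ℝ) L x).apply_mk_symm hy]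
    exact contMDiffAt_const.congr_of_eventuallyEq hev
  -- the pairing against the local sections
  set Ψ : B → B → ℝ := fun x y => φ y (σ x y) with hΨdef
  -- `Ψ x` is continuous on `U x`
  have hΨcont : ∀ x : B, ∀ y₀ ∈ U x, ContinuousAt (Ψ x) y₀ := by
    intro x y₀ hy₀
    simp only [hΨdef, hφdef]
    refine continuousAt_finsum_mul (f := fun i => ⇑(f i))
      (h := fun i y => dotL (S i y) ((trivializationAt (ℝ × ℝ) L i).linearMapAt ℝ y (σ x y)))
      f.locallyFinite (fun i => (f i).contMDiff.continuous) ?_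
    intro i hi
    have hyUi : y₀ ∈ U i := hf i hi
    -- continuity of the coordinates of `s` and `σ x` in the trivialization at `i`
    have hcs : ContinuousAt (fun y =>
        ((trivializationAt (ℝ × ℝ) L i) (TotalSpace.mk' (ℝ × ℝ) y (s y))).2) y₀ := by
      have hmem : TotalSpace.mk' (ℝ × ℝ) y₀ (s y₀) ∈ (trivializationAt (ℝ × ℝ) L i).source := by
        rw [Trivialization.mem_source]; exact hyUi
      have h2 := (trivializationAt (ℝ × ℝ) L i).continuousOn.continuousAt
        ((trivializationAt (ℝ × ℝ) L i).open_source.mem_nhds hmem)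
      have h3 : ContinuousAt (fun y : B => TotalSpace.mk' (ℝ × ℝ) y (s y)) y₀ := hs.continuousAt
      have h4 : ContinuousAt (fun y : B =>
          (trivializationAt (ℝ × ℝ) L i) (TotalSpace.mk' (ℝ × ℝ) y (s y))) y₀ :=
        ContinuousAt.comp (x := y₀)
          (f := fun y : B => TotalSpace.mk' (ℝ × ℝ) y (s y)) h2 h3
      exact continuous_snd.continuousAt.comp h4
    have hcσ : ContinuousAt (fun y =>
        ((trivializationAt (ℝ × ℝ) L i) (TotalSpace.mk' (ℝ × ℝ) y (σ x y))).2) y₀ := by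
      have hmem : TotalSpace.mk' (ℝ × ℝ) y₀ (σ x y₀) ∈ (trivializationAt (ℝ × ℝ) L i).source := by
        rw [Trivialization.mem_source]; exact hyUi
      have h2 := (trivializationAt (ℝ × ℝ) L i).continuousOn.continuousAt
        ((trivializationAt (ℝ × ℝ) L i).open_source.mem_nhds hmem)
      have h4 : ContinuousAt (fun y : B =>
          (trivializationAt (ℝ × ℝ) L i) (TotalSpace.mk' (ℝ × ℝ) y (σ x y))) y₀ :=
        ContinuousAt.comp (x := y₀)
          (f := fun y : B => TotalSpace.mk' (ℝ × ℝ) y (σ x y)) h2 (hσcont x y₀ hy₀)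
      exact continuous_snd.continuousAt.comp h4
    have hdot : ContinuousAt (fun y =>
        dotL (((trivializationAt (ℝ × ℝ) L i) (TotalSpace.mk' (ℝ × ℝ) y (s y))).2)
          (((trivializationAt (ℝ × ℝ) L i) (TotalSpace.mk' (ℝ × ℝ) y (σ x y))).2)) y₀ := by
      simp only [dotL_apply]
      exact (hcs.fst.mul hcσ.fst).add (hcs.snd.mul hcσ.snd)
    refine hdot.congr_of_eventuallyEq ?_
    filter_upwards [((hUopen i).inter (hUopen x)).mem_nhds ⟨hyUi, hy₀⟩] with y hy
    simp only [hSdef]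
    rw [Trivialization.linearMapAt_apply, Trivialization.linearMapAt_apply,
      if_pos hy.1, if_pos hy.1]
  -- `Ψ x x > 0`
  have hΨx : ∀ x : B, 0 < Ψ x x := by
    intro x
    simp only [hΨdef, hσx]
    exact hφs x
  -- choose the neighborhoods on which `Ψ x` is positive
  have hWex : ∀ x : B, ∃ Wx : Set B, IsOpen Wx ∧ x ∈ Wx ∧ Wx ⊆ U x ∧ ∀ y ∈ Wx, 0 < Ψ x y := by
    intro x
    have h1 : (Ψ x) ⁻¹' Ioi (0 : ℝ) ∈ 𝓝 x :=
      (hΨcont x x (hUmem x)).preimage_mem_nhds (isOpen_Ioi.mem_nhds (hΨx x))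
    have h2 : (Ψ x) ⁻¹' Ioi (0 : ℝ) ∩ U x ∈ 𝓝 x :=
      inter_mem h1 ((hUopen x).mem_nhds (hUmem x))
    obtain ⟨Wx, hWsub, hWopen, hWx⟩ := mem_nhds_iff.1 h2
    exact ⟨Wx, hWopen, hWx, fun y hy => (hWsub hy).2, fun y hy => (hWsub hy).1⟩
  choose W hWopen hWx hWU hWpos using hWex
  -- second smooth partition of unity, subordinate to the `W x`
  obtain ⟨g, hg⟩ := hpart B W hWopen (eq_univ_of_forall fun x => mem_iUnion.2 ⟨x, hWx x⟩)
  -- the candidate section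
  set t : ∀ y : B, L y := fun y => ∑ᶠ x, g x y • σ x y with htdef
  have hGfin : ∀ y : B, (support fun x => g x y).Finite := by
    intro y
    exact (g.locallyFinite.point_finite y).subset fun i hi => by simpa using hi
  have htG : ∀ y : B, t y = ∑ x ∈ (hGfin y).toFinset, g x y • σ x y := by
    intro y
    refine finsum_eq_finset_sum_of_support_subset _ ?_
    intro x hx
    simp only [mem_support] at hx
    simp only [Finset.coe_sort_coe, Set.Finite.coe_toFinset, mem_support]
    exact fun h0 => hx (by rw [h0, zero_smul])
  -- linearity: the trivialization coordinates of `t`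
  have hlin_t : ∀ (e : Trivialization (ℝ × ℝ) (π (ℝ × ℝ) L)) [e.IsLinear ℝ],
      ∀ y : B, e.linearMapAt ℝ y (t y) =
        ∑ x ∈ (hGfin y).toFinset, g x y • e.linearMapAt ℝ y (σ x y) := by
    intro e _ y
    rw [htG, map_sum]
    simp only [map_smul]
  -- smoothness of `t`
  have htsmooth : ContMDiff 𝓘(ℝ, E) (𝓘(ℝ, E).prod 𝓘(ℝ, ℝ × ℝ)) (⊤ : ℕ∞)
      (fun y => TotalSpace.mk' (ℝ × ℝ) y (t y)) := by
    intro y₀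
    have hy₀ : y₀ ∈ (trivializationAt (ℝ × ℝ) L y₀).baseSet := hUmem y₀
    have hsrc : TotalSpace.mk' (ℝ × ℝ) y₀ (t y₀) ∈ (trivializationAt (ℝ × ℝ) L y₀).source := by
      rw [Trivialization.mem_source]; exact hy₀
    refine ((trivializationAt (ℝ × ℝ) L y₀).contMDiffAt_iff
      (f := fun y => TotalSpace.mk' (ℝ × ℝ) y (t y)) hsrc).2 ⟨contMDiffAt_id, ?_⟩
    have hsmooth_sum : ContMDiffAt 𝓘(ℝ, E) 𝓘(ℝ, ℝ × ℝ) (⊤ : ℕ∞)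
        (fun y => ∑ᶠ x, g x y • (trivializationAt (ℝ × ℝ) L y₀).linearMapAt ℝ y (σ x y)) y₀ := by
      refine g.contMDiffAt_finsum ?_
      intro x hx
      have hy₀Wx : y₀ ∈ W x := hg x hx
      have hy₀Ux : y₀ ∈ U x := hWU x hy₀Wx
      have hσs := hσsmooth x y₀ hy₀Ux
      have hsrc' : TotalSpace.mk' (ℝ × ℝ) y₀ (σ x y₀) ∈
          (trivializationAt (ℝ × ℝ) L y₀).source := by
        rw [Trivialization.mem_source]; exact hy₀
      have hcoord := (((trivializationAt (ℝ × ℝ) L y₀).contMDiffAt_iff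
        (f := fun y => TotalSpace.mk' (ℝ × ℝ) y (σ x y)) hsrc').1 hσs).2
      refine hcoord.congr_of_eventuallyEq ?_
      filter_upwards [(trivializationAt (ℝ × ℝ) L y₀).open_baseSet.mem_nhds hy₀] with y hy
      rw [Trivialization.linearMapAt_apply, if_pos hy]
    refine hsmooth_sum.congr_of_eventuallyEq ?_
    filter_upwards [(trivializationAt (ℝ × ℝ) L y₀).open_baseSet.mem_nhds hy₀] with y hy
    calc ((trivializationAt (ℝ × ℝ) L y₀) (TotalSpace.mk' (ℝ × ℝ) y (t y))).2
        = (trivializationAt (ℝ × ℝ) L y₀).linearMapAt ℝ y (t y) := by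
          rw [Trivialization.linearMapAt_apply, if_pos hy]
      _ = ∑ x ∈ (hGfin y).toFinset,
            g x y • (trivializationAt (ℝ × ℝ) L y₀).linearMapAt ℝ y (σ x y) :=
          hlin_t (trivializationAt (ℝ × ℝ) L y₀) y
      _ = ∑ᶠ x, g x y • (trivializationAt (ℝ × ℝ) L y₀).linearMapAt ℝ y (σ x y) := by
          refine (finsum_eq_finset_sum_of_support_subset _ ?_).symm
          intro x hx
          simp only [mem_support] at hx
          simp only [Finset.coe_sort_coe, Set.Finite.coe_toFinset, mem_support]
          exact fun h0 => hx (by rw [h0, zero_smul])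
  -- nonvanishing of `t`
  refine ⟨t, htsmooth, ?_⟩
  intro y
  have hsum1 : ∑ x ∈ (hGfin y).toFinset, g x y = 1 := by
    rw [← finsum_eq_finset_sum_of_support_subset _
      (by simp [Set.Finite.coe_toFinset] : (support fun x => g x y) ⊆ _)]
    exact g.sum_eq_one (mem_univ y)
  have hGne : (hGfin y).toFinset.Nonempty := by
    by_contra h
    rw [Finset.not_nonempty_iff_eq_empty] at h
    rw [h, Finset.sum_empty] at hsum1
    exact one_ne_zero hsum1.symm
  have key : φ y (t y) = ∑ x ∈ (hGfin y).toFinset, g x y * Ψ x y := by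
    calc φ y (t y)
        = ∑ i ∈ (hfin y).toFinset,
            f i y * dotL (S i y) ((trivializationAt (ℝ × ℝ) L i).linearMapAt ℝ y (t y)) :=
          hφsum y (t y)
      _ = ∑ i ∈ (hfin y).toFinset, ∑ x ∈ (hGfin y).toFinset,
            g x y * (f i y * dotL (S i y)
              ((trivializationAt (ℝ × ℝ) L i).linearMapAt ℝ y (σ x y))) := by
          refine Finset.sum_congr rfl fun i _ => ?_
          rw [hlin_t (trivializationAt (ℝ × ℝ) L i) y, map_sum]
          simp only [map_smul, smul_eq_mul]
          rw [Finset.mul_sum]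
          exact Finset.sum_congr rfl fun x _ => by ring
      _ = ∑ x ∈ (hGfin y).toFinset, ∑ i ∈ (hfin y).toFinset,
            g x y * (f i y * dotL (S i y)
              ((trivializationAt (ℝ × ℝ) L i).linearMapAt ℝ y (σ x y))) :=
          Finset.sum_comm
      _ = ∑ x ∈ (hGfin y).toFinset, g x y * Ψ x y := by
          refine Finset.sum_congr rfl fun x _ => ?_
          rw [← Finset.mul_sum]
          congr 1
          simp only [hΨdef]
          exact (hφsum y (σ x y)).symm
  have hpos : 0 < φ y (t y) := by
    rw [key]
    refine Finset.sum_pos ?_ hGne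
    intro x hx
    simp only [Set.Finite.mem_toFinset, mem_support] at hx
    have hgpos : 0 < g x y := lt_of_le_of_ne (g.nonneg x y) (Ne.symm hx)
    have hyWx : y ∈ W x := hg x (subset_tsupport _ (by simpa using hx))
    exact mul_pos hgpos (hWpos x y hyWx)
  intro h0
  rw [h0, hφ0 y] at hpos
  exact lt_irrefl 0 hpos
end

section
/- Let B be a metric space, R ⊆ B a finite subset, and B* := B \ R (with the subspace topology). Suppose B* carries the structure of a smooth Banach manifold modelled on a real Banach space E, compatible with its topology, which admits smooth partitions of unity. Let Θ → B be a topological real line bundle (fiber ℝ) whose restriction to B* is a smooth vector bundle. Then there exist an open set V ⊆ B containing R and a C^∞ section s of Θ over B* such that s(x) ≠ 0 for every x ∈ B* ∩ V. -/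
open Bundle Set
open scoped Manifold

/-- The inclusion of a subset of a topological space, as a continuous map. -/
def subsetIncl {B : Type*} [TopologicalSpace B] (S : Set B) : C(S, B) :=
  ⟨Subtype.val, continuous_subtype_val⟩

/-- Lemma 7.2: Let `B` be a metric space, `R ⊆ B` a finite subset and `B* := B \ R`.
Suppose `B*` carries the structure of a smooth Banach manifold modelled on a real Banach
space `E` (compatible with its topology) admitting smooth partitions of unity.  Let
`Θ → B` be a topological real line bundle whose restriction to `B*` is a smooth vector
bundle.  Then there are an open set `V ⊇ R` in `B` and a smooth section `s` of `Θ` over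
`B*` which is nowhere zero on `B* ∩ V`. -/
theorem exists_smooth_section_nonvanishing_near_finite_set
    {E : Type u} [NormedAddCommGroup E] [NormedSpace ℝ E]
    {B : Type u} [MetricSpace B] (R : Set B) (hR : R.Finite)
    [ChartedSpace E ↥Rᶜ] [IsManifold 𝓘(ℝ, E) (⊤ : ℕ∞) ↥Rᶜ]
    (hpart : ∀ (ι : Type u) (U : ι → Set ↥Rᶜ), (∀ i, IsOpen (U i)) → (⋃ i, U i) = univ →
      ∃ f : SmoothPartitionOfUnity ι 𝓘(ℝ, E) ↥Rᶜ univ, f.IsSubordinate U)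
    (Θ : B → Type u) [∀ x, TopologicalSpace (Θ x)] [∀ x, AddCommGroup (Θ x)]
    [∀ x, Module ℝ (Θ x)] [TopologicalSpace (TotalSpace ℝ Θ)]
    [FiberBundle ℝ Θ] [VectorBundle ℝ ℝ Θ]
    [ContMDiffVectorBundle (⊤ : ℕ∞) ℝ ((subsetIncl Rᶜ : ↥Rᶜ → B) *ᵖ Θ) 𝓘(ℝ, E)] :
    ∃ V : Set B, IsOpen V ∧ R ⊆ V ∧
      ∃ s : ∀ x : ↥Rᶜ, ((subsetIncl Rᶜ : ↥Rᶜ → B) *ᵖ Θ) x,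
        ContMDiff 𝓘(ℝ, E) (𝓘(ℝ, E).prod 𝓘(ℝ, ℝ)) (⊤ : ℕ∞)
          (fun x => TotalSpace.mk' ℝ x (s x)) ∧
        ∀ x : ↥Rᶜ, (x : B) ∈ V → s x ≠ 0 := by
  classical
  -- Step 1: choose radii around the points of `R`.
  have hex : ∀ r, r ∈ R → ∃ δ : ℝ, 0 < δ ∧
      Metric.ball r (2 * δ) ⊆ (trivializationAt ℝ Θ r).baseSet ∧
      ∀ r' ∈ R, r' ≠ r → 4 * δ ≤ dist r r' := by
    intro r hr
    obtain ⟨δ, δpos, hδ⟩ := Metric.isOpen_iff.1 (trivializationAt ℝ Θ r).open_baseSet r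
      (mem_baseSet_trivializationAt ℝ Θ r)
    obtain ⟨c, cpos, hc⟩ : ∃ c : ℝ, 0 < c ∧ ∀ r' ∈ R, r' ≠ r → c ≤ dist r r' := by
      by_cases h : (R \ {r}).Nonempty
      · have hfin : (R \ {r}).Finite := hR.subset diff_subset
        refine ⟨Metric.infDist r (R \ {r}), ?_, fun r' hr' hne =>
          Metric.infDist_le_dist_of_mem ⟨hr', by simpa using hne⟩⟩
        refine (hfin.isClosed.notMem_iff_infDist_pos h).1 ?_
        simp
      · exact ⟨1, one_pos, fun r' hr' hne =>
          absurd (show r' ∈ R \ {r} from ⟨hr', by simpa using hne⟩)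
            (fun hmem => h ⟨r', hmem⟩)⟩
    refine ⟨min (δ / 2) (c / 4), by positivity, ?_, ?_⟩
    · intro y hy
      apply hδ
      have h1 : dist y r < 2 * min (δ / 2) (c / 4) := Metric.mem_ball.1 hy
      have h2 : 2 * min (δ / 2) (c / 4) ≤ δ := by
        have := min_le_left (δ / 2) (c / 4); linarith
      exact Metric.mem_ball.2 (lt_of_lt_of_le h1 h2)
    · intro r' hr' hne
      have h1 : 4 * min (δ / 2) (c / 4) ≤ c := by
        have := min_le_right (δ / 2) (c / 4); linarith
      exact h1.trans (hc r' hr' hne)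
  choose! ε εpos εball εsep using hex
  -- the open set V
  refine ⟨⋃ r ∈ R, Metric.ball r (ε r), isOpen_biUnion fun r _ => Metric.isOpen_ball,
    fun r hr => mem_biUnion hr (Metric.mem_ball_self (εpos r hr)), ?_⟩
  -- pulled-back trivializations
  let e' : B → Trivialization ℝ (π ℝ ((subsetIncl Rᶜ : ↥Rᶜ → B) *ᵖ Θ)) := fun r =>
    (trivializationAt ℝ Θ r).pullback (subsetIncl Rᶜ)
  have he'mem : ∀ r, MemTrivializationAtlas (e' r) := fun r =>
    ⟨⟨trivializationAt ℝ Θ r, inferInstance, rfl⟩⟩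
  -- the predicate distinguishing points near R
  let P : ↥Rᶜ → Prop := fun p => ∃ r ∈ R, dist (p : B) r < 2 * ε r
  let rp : ∀ p, P p → B := fun p h => h.choose
  have rpR : ∀ p (h : P p), rp p h ∈ R := fun p h => h.choose_spec.1
  have rpdist : ∀ p (h : P p), dist (p : B) (rp p h) < 2 * ε (rp p h) := fun p h =>
    h.choose_spec.2
  let fp : ∀ p, P p → ↥Rᶜ → ℝ := fun p h x =>
    ((e' (rp p h)).coordChangeL ℝ (trivializationAt ℝ ((subsetIncl Rᶜ : ↥Rᶜ → B) *ᵖ Θ) p) x :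
      ℝ →L[ℝ] ℝ) 1
  let N : ↥Rᶜ → Set ↥Rᶜ := fun p =>
    if h : P p then
      ((e' (rp p h)).baseSet ∩
          (trivializationAt ℝ ((subsetIncl Rᶜ : ↥Rᶜ → B) *ᵖ Θ) p).baseSet ∩
          (Subtype.val ⁻¹' Metric.ball (rp p h) (2 * ε (rp p h)))) ∩
        ((fun x => fp p h x * fp p h p) ⁻¹' Ioi 0)
    else (Subtype.val ⁻¹' (⋃ r ∈ R, Metric.closedBall r (ε r)))ᶜ
  let t : ∀ p : ↥Rᶜ, ∀ x : ↥Rᶜ, ((subsetIncl Rᶜ : ↥Rᶜ → B) *ᵖ Θ) x := fun p =>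
    if h : P p then
      fun x => (trivializationAt ℝ ((subsetIncl Rᶜ : ↥Rᶜ → B) *ᵖ Θ) p).symm x (fp p h p)
    else 0
  have hNopen : ∀ p, IsOpen (N p) := by
    intro p
    by_cases h : P p
    · simp only [N, dif_pos h]
      have hcont : ContinuousOn (fun x => fp p h x * fp p h p)
          ((e' (rp p h)).baseSet ∩
            (trivializationAt ℝ ((subsetIncl Rᶜ : ↥Rᶜ → B) *ᵖ Θ) p).baseSet) := by
        have := he'mem (rp p h)
        have h1 := continuousOn_coordChange ℝ (e' (rp p h))
          (trivializationAt ℝ ((subsetIncl Rᶜ : ↥Rᶜ → B) *ᵖ Θ) p)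
        exact ((ContinuousLinearMap.apply ℝ ℝ (1 : ℝ)).continuous.comp_continuousOn h1).mul
          continuousOn_const
      refine ContinuousOn.isOpen_inter_preimage (hcont.mono inter_subset_left) ?_ isOpen_Ioi
      exact (((e' _).open_baseSet.inter (trivializationAt ℝ _ p).open_baseSet).inter
        (Metric.isOpen_ball.preimage continuous_subtype_val))
    · simp only [N, dif_neg h]
      refine (IsClosed.preimage continuous_subtype_val ?_).isOpen_compl
      exact hR.isClosed_biUnion fun r _ => Metric.isClosed_closedBall
  have hNmem : ∀ p, p ∈ N p := by
    intro p
    by_cases h : P p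
    · simp only [N, dif_pos h]
      have h1 : p ∈ (e' (rp p h)).baseSet :=
        εball (rp p h) (rpR p h) (Metric.mem_ball.2 (rpdist p h))
      have h2 : p ∈ (trivializationAt ℝ ((subsetIncl Rᶜ : ↥Rᶜ → B) *ᵖ Θ) p).baseSet :=
        mem_baseSet_trivializationAt ℝ _ p
      refine ⟨⟨⟨h1, h2⟩, Metric.mem_ball.2 (rpdist p h)⟩, ?_⟩
      have hne : fp p h p ≠ 0 := by
        intro h0
        have h0' : ((e' (rp p h)).coordChangeL ℝ
            (trivializationAt ℝ ((subsetIncl Rᶜ : ↥Rᶜ → B) *ᵖ Θ) p) p) 1 = 0 := h0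
        refine one_ne_zero (α := ℝ) ?_
        rw [← ContinuousLinearEquiv.symm_apply_apply ((e' (rp p h)).coordChangeL ℝ
          (trivializationAt ℝ ((subsetIncl Rᶜ : ↥Rᶜ → B) *ᵖ Θ) p) p) 1, h0', map_zero]
      exact mem_preimage.2 (mul_self_pos.2 hne)
    · simp only [N, dif_neg h]
      intro hmem
      simp only [mem_preimage, mem_iUnion₂, Metric.mem_closedBall] at hmem
      obtain ⟨r, hr, hle⟩ := hmem
      exact h ⟨r, hr, lt_of_le_of_lt hle (by linarith [εpos r hr])⟩
  obtain ⟨f, hf⟩ := hpart ↥Rᶜ N hNopen (eq_univ_of_forall fun x => mem_iUnion.2 ⟨x, hNmem x⟩)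
  refine ⟨fun x => ∑ᶠ p, f p x • t p x, ?_, ?_⟩
  · -- smoothness
    intro x₀
    rw [Bundle.contMDiffAt_section]
    have hx₀ : x₀ ∈ (trivializationAt ℝ ((subsetIncl Rᶜ : ↥Rᶜ → B) *ᵖ Θ) x₀).baseSet :=
      mem_baseSet_trivializationAt ℝ _ x₀
    set e₀ := trivializationAt ℝ ((subsetIncl Rᶜ : ↥Rᶜ → B) *ᵖ Θ) x₀ with he₀
    have main : ContMDiffAt 𝓘(ℝ, E) 𝓘(ℝ, ℝ) (⊤ : ℕ∞)
        (fun x => ∑ᶠ p, f p x • (e₀ ⟨x, t p x⟩).2) x₀ := by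
      apply f.contMDiffAt_finsum
      intro p hp
      have hNp := hf p hp
      by_cases h : P p
      · simp only [N, dif_pos h] at hNp
        obtain ⟨⟨⟨hb1, hb2⟩, hb3⟩, hb4⟩ := hNp
        have := he'mem (rp p h)
        have hcc : ContMDiffAt 𝓘(ℝ, E) 𝓘(ℝ, ℝ →L[ℝ] ℝ) (⊤ : ℕ∞)
            (fun x => ((trivializationAt ℝ ((subsetIncl Rᶜ : ↥Rᶜ → B) *ᵖ Θ) p).coordChangeL
              ℝ e₀ x : ℝ →L[ℝ] ℝ)) x₀ :=
          contMDiffAt_coordChangeL hb2 hx₀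
        refine (hcc.clm_apply (contMDiffAt_const (c := fp p h p))).congr_of_eventuallyEq ?_
        filter_upwards [(((trivializationAt ℝ ((subsetIncl Rᶜ : ↥Rᶜ → B) *ᵖ Θ)
          p).open_baseSet.inter e₀.open_baseSet).mem_nhds ⟨hb2, hx₀⟩)] with x hx
        simp only [t, dif_pos h]
        exact (Trivialization.coordChangeL_apply _ _ hx _).symm
      · refine (contMDiffAt_const (c := (0 : ℝ))).congr_of_eventuallyEq ?_
        filter_upwards [e₀.open_baseSet.mem_nhds hx₀] with x hx
        simp only [t, dif_neg h]
        exact (e₀.linear ℝ hx).map_zero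
    refine main.congr_of_eventuallyEq ?_
    filter_upwards [e₀.open_baseSet.mem_nhds hx₀] with x hx
    have hfin : (Function.support fun p => f p x • t p x).Finite := by
      refine (f.locallyFinite.point_finite x).subset fun p hp => ?_
      simp only [Function.mem_support] at hp ⊢
      intro h0
      exact hp (by rw [h0, zero_smul])
    have key : ∀ v : ((subsetIncl Rᶜ : ↥Rᶜ → B) *ᵖ Θ) x,
        (e₀ ⟨x, v⟩).2 = e₀.continuousLinearMapAt ℝ x v := by
      intro v
      rw [e₀.continuousLinearMapAt_apply ℝ, e₀.coe_linearMapAt_of_mem hx]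
    calc (e₀ ⟨x, ∑ᶠ p, f p x • t p x⟩).2
        = e₀.continuousLinearMapAt ℝ x (∑ᶠ p, f p x • t p x) := key _
      _ = ∑ᶠ p, e₀.continuousLinearMapAt ℝ x (f p x • t p x) :=
          ((e₀.continuousLinearMapAt ℝ x).toLinearMap.toAddMonoidHom).map_finsum hfin
      _ = ∑ᶠ p, f p x • (e₀ ⟨x, t p x⟩).2 := finsum_congr fun p => by
          rw [map_smul, key]
  · -- nonvanishing
    intro x hxV
    obtain ⟨r, hrR, hxr⟩ := mem_iUnion₂.1 hxV
    have hxr' : dist (x : B) r < ε r := Metric.mem_ball.1 hxr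
    have hxe'r : x ∈ (e' r).baseSet :=
      εball r hrR (Metric.mem_ball.2
        (show dist (x : B) r < 2 * ε r by linarith [εpos r hrR]))
    have hx₀ : x ∈ (trivializationAt ℝ ((subsetIncl Rᶜ : ↥Rᶜ → B) *ᵖ Θ) x).baseSet :=
      mem_baseSet_trivializationAt ℝ _ x
    set e₀ := trivializationAt ℝ ((subsetIncl Rᶜ : ↥Rᶜ → B) *ᵖ Θ) x with he₀
    set φ := e₀.continuousLinearEquivAt ℝ x hx₀ with hφ
    set σ : ((subsetIncl Rᶜ : ↥Rᶜ → B) *ᵖ Θ) x := (e' r).symm x 1 with hσdef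
    have hσ : σ ≠ 0 := by
      intro h0
      have h1 := congrArg Prod.snd ((e' r).apply_mk_symm hxe'r (1 : ℝ))
      rw [show (e' r).symm x 1 = σ from rfl, h0] at h1
      have h2 : ((e' r) ⟨x, 0⟩).2 = 0 := ((e' r).linear ℝ hxe'r).map_zero
      rw [h2] at h1
      exact zero_ne_one h1
    have hgσ : φ σ ≠ 0 := by
      intro h0
      exact hσ (by simpa using congrArg φ.symm h0)
    have key : ∀ p, f p x ≠ 0 → ∃ c : ℝ, 0 < c ∧ φ (t p x) = c * φ σ := by
      intro p hfp
      have hNp : x ∈ N p := hf p (subset_tsupport _ hfp)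
      by_cases h : P p
      · simp only [N, dif_pos h] at hNp
        obtain ⟨⟨⟨hb1, hb2⟩, hb3⟩, hb4⟩ := hNp
        have hb4' : 0 < fp p h x * fp p h p := hb4
        have hreq : rp p h = r := by
          by_contra hne
          have h1 := εsep r hrR (rp p h) (rpR p h) hne
          have h2 := εsep (rp p h) (rpR p h) r hrR (fun e => hne e.symm)
          have h3 : dist r (rp p h) ≤ dist r (x : B) + dist (x : B) (rp p h) :=
            dist_triangle _ _ _
          have h4 : dist (x : B) (rp p h) < 2 * ε (rp p h) := Metric.mem_ball.1 hb3
          have h5 : dist r (x : B) < ε r := by rw [dist_comm]; exact hxr'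
          have h6 : dist (rp p h) r = dist r (rp p h) := dist_comm _ _
          linarith [εpos r hrR, εpos (rp p h) (rpR p h)]
        have hfx0 : fp p h x ≠ 0 := by
          intro h0
          rw [h0, zero_mul] at hb4'
          exact lt_irrefl 0 hb4'
        have hcpos : 0 < fp p h p / fp p h x := by
          rcases mul_pos_iff.1 hb4' with ⟨ha, hb⟩ | ⟨ha, hb⟩
          · exact div_pos hb ha
          · exact div_pos_of_neg_of_neg hb ha
        refine ⟨fp p h p / fp p h x, hcpos, ?_⟩
        have hσcoord : (trivializationAt ℝ ((subsetIncl Rᶜ : ↥Rᶜ → B) *ᵖ Θ) p).symm x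
            (fp p h x) = σ := by
          have hx12 : x ∈ (e' (rp p h)).baseSet ∩
              (trivializationAt ℝ ((subsetIncl Rᶜ : ↥Rᶜ → B) *ᵖ Θ) p).baseSet := by
            rw [hreq]; exact ⟨hxe'r, hb2⟩
          have hcc := Trivialization.coordChangeL_apply (R := ℝ) (e' (rp p h))
            (trivializationAt ℝ ((subsetIncl Rᶜ : ↥Rᶜ → B) *ᵖ Θ) p) hx12 (1 : ℝ)
          have hfpx : fp p h x = ((trivializationAt ℝ ((subsetIncl Rᶜ : ↥Rᶜ → B) *ᵖ Θ) p)
              ⟨x, σ⟩).2 := by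
            have h9 : σ = (e' (rp p h)).symm x 1 := by rw [hσdef, hreq]
            rw [h9]
            exact hcc
          rw [hfpx]
          exact (trivializationAt ℝ ((subsetIncl Rᶜ : ↥Rᶜ → B) *ᵖ Θ) p).symm_apply_apply_mk
            hb2 σ
        have hsmul : (trivializationAt ℝ ((subsetIncl Rᶜ : ↥Rᶜ → B) *ᵖ Θ) p).symm x
            (fp p h p) = (fp p h p / fp p h x) • σ := by
          rw [← hσcoord]
          have h8 := map_smul ((trivializationAt ℝ ((subsetIncl Rᶜ : ↥Rᶜ → B) *ᵖ Θ) p).symmL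
            ℝ x) (fp p h p / fp p h x) (fp p h x)
          rw [smul_eq_mul, div_mul_cancel₀ _ hfx0] at h8
          simpa only [Trivialization.symmL_apply _ hb2] using h8
        calc φ (t p x)
            = φ ((fp p h p / fp p h x) • σ) := by
              simp only [t, dif_pos h]; rw [hsmul]
          _ = (fp p h p / fp p h x) * φ σ := by rw [map_smul, smul_eq_mul]
      · exfalso
        simp only [N, dif_neg h] at hNp
        exact hNp (mem_preimage.2 (mem_biUnion hrR (Metric.mem_closedBall.2 hxr'.le)))
    intro h0
    have hfin : (Function.support fun p => f p x • t p x).Finite := by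
      refine (f.locallyFinite.point_finite x).subset fun p hp => ?_
      simp only [Function.mem_support] at hp ⊢
      intro hz
      exact hp (by rw [hz, zero_smul])
    have hsum : φ (∑ᶠ p, f p x • t p x) = ∑ᶠ p, f p x * φ (t p x) := by
      calc φ (∑ᶠ p, f p x • t p x)
          = ∑ᶠ p, φ (f p x • t p x) :=
            ((φ : ((subsetIncl Rᶜ : ↥Rᶜ → B) *ᵖ Θ) x →L[ℝ] ℝ).toLinearMap.toAddMonoidHom).map_finsum
              hfin
        _ = ∑ᶠ p, f p x * φ (t p x) := finsum_congr fun p => by rw [map_smul, smul_eq_mul]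
    have hfin2 : (Function.support fun p => f p x * φ (t p x)).Finite := by
      refine (f.locallyFinite.point_finite x).subset fun p hp => ?_
      simp only [Function.mem_support] at hp ⊢
      intro hz
      exact hp (by rw [hz, zero_mul])
    have hpos : 0 < (∑ᶠ p, f p x * φ (t p x)) * φ σ := by
      rw [finsum_mul]
      refine finsum_pos' (fun p => ?_) ?_ ?_
      · by_cases hfp : f p x = 0
        · simp [hfp]
        · obtain ⟨c, hc, hEq⟩ := key p hfp
          rw [hEq, show f p x * (c * φ σ) * φ σ = f p x * c * (φ σ * φ σ) by ring]
          exact mul_nonneg (mul_nonneg (f.nonneg p x) hc.le) (mul_self_nonneg _)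
      · obtain ⟨p, hp⟩ := f.exists_pos_of_mem (mem_univ x)
        obtain ⟨c, hc, hEq⟩ := key p hp.ne'
        refine ⟨p, ?_⟩
        rw [hEq, show f p x * (c * φ σ) * φ σ = f p x * c * (φ σ * φ σ) by ring]
        exact mul_pos (mul_pos hp hc) (mul_self_pos.2 hgσ)
      · refine hfin2.subset fun p hp => ?_
        simp only [Function.mem_support] at hp ⊢
        intro hz
        exact hp (by rw [hz, zero_mul])
    replace h0 : (∑ᶠ p, f p x • t p x) = 0 := h0
    rw [h0] at hsum
    rw [map_zero] at hsum
    rw [← hsum, zero_mul] at hpos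
    exact lt_irrefl 0 hpos
end
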